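/- arXiv:2603.03262 — 2 statements merged into one kernel-verified Lean document; each statement's English description precedes it below -/
import Mathlib

section
/- In a locally colored graph G, the sub-graph consisting of the vertices and edges of any cusp-free cycle is ⇝-connected. -/
/-- A finite undirected multigraph without loops: each edge is incident to
exactly two distinct endpoints. -/
structure Multigraph (V : Type) (E : Type) where
  inc : E → V → Prop
  exists_two : ∀ e : E, ∃ a b : V, a ≠ b ∧ ∀ w : V, inc e w ↔ (w = a ∨ w = b)

namespace Multigraph

variable {V E C : Type}

/-- A path (walk) in a multigraph: an alternating sequence of vertices and
edges such that the endpoints of the `i`-th edge are exactly the `i`-th and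
`(i+1)`-th vertices. -/
structure Walk (G : Multigraph V E) where
  len : ℕ
  vert : Fin (len + 1) → V
  edge : Fin len → E
  incs : ∀ (i : ℕ) (h : i < len), ∀ w : V,
    G.inc (edge ⟨i, h⟩) w ↔ (w = vert ⟨i, by omega⟩ ∨ w = vert ⟨i + 1, by omega⟩)

variable {G : Multigraph V E}

namespace Walk

/-- The source (first vertex) of a path. -/
def src (p : G.Walk) : V := p.vert ⟨0, by omega⟩

/-- The target (last vertex) of a path. -/
def tgt (p : G.Walk) : V := p.vert ⟨p.len, by omega⟩

def IsClosed (p : G.Walk) : Prop := p.src = p.tgt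

def IsOpen (p : G.Walk) : Prop := p.src ≠ p.tgt

/-- A path is simple when its edges are pairwise distinct and its vertices are
pairwise distinct, except that its two endpoints may coincide. -/
def IsSimple (p : G.Walk) : Prop :=
  (∀ (i j : ℕ) (hi : i < p.len) (hj : j < p.len),
      p.edge ⟨i, hi⟩ = p.edge ⟨j, hj⟩ → i = j) ∧
  (∀ (i j : ℕ) (hi : i < p.len + 1) (hj : j < p.len + 1), i < j →
      p.vert ⟨i, hi⟩ = p.vert ⟨j, hj⟩ → i = 0 ∧ j = p.len)

/-- A cycle is a non-empty simple closed path. -/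
def IsCycle (p : G.Walk) : Prop := p.IsSimple ∧ p.IsClosed ∧ 0 < p.len

/-- `x` occurs as a vertex of `p`. -/
def MemV (p : G.Walk) (x : V) : Prop := ∃ (i : ℕ) (h : i < p.len + 1), p.vert ⟨i, h⟩ = x

/-- `e` occurs as an edge of `p`. -/
def MemE (p : G.Walk) (e : E) : Prop := ∃ (i : ℕ) (h : i < p.len), p.edge ⟨i, h⟩ = e

/-- With respect to a local coloring `c`, the path `p` has a cusp at
vertex-position `j`, at vertex `u`, with color `α`: either an internal cusp
(two consecutive distinct edges with the same color at their middle vertex),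
or -- when `j = 0` and `p` is closed -- the cusp formed by its last edge, its
source and its first edge. -/
def CuspAt (c : E → V → C) (p : G.Walk) (j : ℕ) (u : V) (α : C) : Prop :=
  (∃ (h1 : 0 < j) (h2 : j < p.len),
      p.vert ⟨j, by omega⟩ = u ∧
      p.edge ⟨j - 1, by omega⟩ ≠ p.edge ⟨j, h2⟩ ∧
      c (p.edge ⟨j - 1, by omega⟩) u = α ∧ c (p.edge ⟨j, h2⟩) u = α) ∨
  (j = 0 ∧ p.IsClosed ∧ p.src = u ∧
    ∃ h : 0 < p.len,
      p.edge ⟨p.len - 1, by omega⟩ ≠ p.edge ⟨0, h⟩ ∧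
      c (p.edge ⟨p.len - 1, by omega⟩) u = α ∧ c (p.edge ⟨0, h⟩) u = α)

/-- `p` has a cusp at vertex-position `j`. -/
def CuspIdx (c : E → V → C) (p : G.Walk) (j : ℕ) : Prop := ∃ u α, p.CuspAt c j u α

/-- `p` has a cusp whose vertex is `u`. -/
def HasCuspAtV (c : E → V → C) (p : G.Walk) (u : V) : Prop := ∃ j α, p.CuspAt c j u α

/-- A cusp-free (alternating) path. -/
def CuspFree (c : E → V → C) (p : G.Walk) : Prop := ∀ j : ℕ, ¬ p.CuspIdx c j

/-- The number of cusps of a path. -/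
noncomputable def cuspCount (c : E → V → C) (p : G.Walk) : ℕ :=
  {j : ℕ | p.CuspIdx c j}.ncard

/-- The starting color of `p` is not `α`. -/
def StartColorNe (c : E → V → C) (p : G.Walk) (α : C) : Prop :=
  ∀ h : 0 < p.len, c (p.edge ⟨0, h⟩) p.src ≠ α

/-- `p` is non-empty and its ending color is `β`. -/
def EndColorIs (c : E → V → C) (p : G.Walk) (β : C) : Prop :=
  ∃ h : 0 < p.len, c (p.edge ⟨p.len - 1, by omega⟩) p.tgt = β

/-- `q` is a (contiguous) sub-path of `p`. -/
def IsSubpathOf (q p : G.Walk) : Prop :=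
  ∃ (k : ℕ) (hk : k + q.len ≤ p.len),
    (∀ (i : ℕ) (hi : i < q.len + 1), q.vert ⟨i, hi⟩ = p.vert ⟨k + i, by omega⟩) ∧
    (∀ (i : ℕ) (hi : i < q.len), q.edge ⟨i, hi⟩ = p.edge ⟨k + i, by omega⟩)

/-- `r` is the path `p` extended (at its end) by the edge `e` to the vertex `l`;
that is, `r = p · (tgt p, e, l)`. -/
def ExtendsBy (r p : G.Walk) (e : E) (l : V) : Prop :=
  ∃ hlen : r.len = p.len + 1,
    (∀ (i : ℕ) (hi : i < p.len + 1), r.vert ⟨i, by omega⟩ = p.vert ⟨i, hi⟩) ∧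
    (∀ (i : ℕ) (hi : i < p.len), r.edge ⟨i, by omega⟩ = p.edge ⟨i, hi⟩) ∧
    r.edge ⟨p.len, by omega⟩ = e ∧ r.vert ⟨p.len + 1, by omega⟩ = l

/-- `r` is the path obtained by prefixing `p` with the edge `e`;
that is, `r = (src r, e, src p) · p`. -/
def ConsOf (r : G.Walk) (e : E) (p : G.Walk) : Prop :=
  ∃ hlen : r.len = p.len + 1,
    r.edge ⟨0, by omega⟩ = e ∧
    (∀ (i : ℕ) (hi : i < p.len + 1), r.vert ⟨i + 1, by omega⟩ = p.vert ⟨i, hi⟩) ∧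
    (∀ (i : ℕ) (hi : i < p.len), r.edge ⟨i + 1, by omega⟩ = p.edge ⟨i, hi⟩)

end Walk

/-- `(v, α)` is a cusp-point: two distinct edges incident to `v` both have
color `α` at `v`. -/
def IsCuspPoint (G : Multigraph V E) (c : E → V → C) (v : V) (α : C) : Prop :=
  ∃ e f : E, e ≠ f ∧ G.inc e v ∧ G.inc f v ∧ c e v = α ∧ c f v = α

/-- `(v, α) ⇝_p (u, β)`: `p` is a simple open cusp-free path from `v` to `u`
whose starting color is not `α` and whose ending color is `β`. -/
def StepsTo (G : Multigraph V E) (c : E → V → C) (v : V) (α : C) (u : V) (β : C)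
    (p : G.Walk) : Prop :=
  p.IsSimple ∧ p.IsOpen ∧ p.CuspFree c ∧ p.src = v ∧ p.tgt = u ∧
    p.StartColorNe c α ∧ p.EndColorIs c β

/-- `(v, α) ⇝ (u, β)`. -/
def Steps (G : Multigraph V E) (c : E → V → C) (v : V) (α : C) (u : V) (β : C) : Prop :=
  ∃ p : G.Walk, G.StepsTo c v α u β p

/-- `(v, α) ⊳_p (u, β)`: `(v, α) ⇝_p (u, β)` and no `⇝`-path from `(u, β)`
ends on a vertex of `p`. -/
def TriPath (G : Multigraph V E) (c : E → V → C) (v : V) (α : C) (u : V) (β : C)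
    (p : G.Walk) : Prop :=
  G.StepsTo c v α u β p ∧
    ∀ (x : V) (τ : C) (q : G.Walk), G.StepsTo c u β x τ q → ¬ p.MemV x

/-- `(v, α) ⊳ (u, β)`. -/
def Tri (G : Multigraph V E) (c : E → V → C) (v : V) (α : C) (u : V) (β : C) : Prop :=
  ∃ p : G.Walk, G.TriPath c v α u β p

/-- A splitting vertex: every cycle containing `v` has a cusp at `v`. -/
def IsSplitting (G : Multigraph V E) (c : E → V → C) (v : V) : Prop :=
  ∀ ω : G.Walk, ω.IsCycle → ω.MemV v → ω.HasCuspAtV c v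

/-- A set `P` of vertex-color pairs dominates cusp-points. -/
def Dominates (G : Multigraph V E) (c : E → V → C) (P : Set (V × C)) : Prop :=
  ∀ (v : V) (α : C), G.IsCuspPoint c v α →
    (v, α) ∈ P ∨ ∃ (u : V) (β : C), (u, β) ∈ P ∧ G.Tri c v α u β

/-- `𝔐(v)`: the set of cycles with source `v`, whose last and first edges do
not make a cusp at `v`, with a minimal number of cusps among such cycles. -/
def MinCycles (G : Multigraph V E) (c : E → V → C) (v : V) : Set G.Walk :=
  {ω | ω.IsCycle ∧ ω.src = v ∧ ¬ ω.CuspIdx c 0 ∧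
    ∀ ω' : G.Walk, ω'.IsCycle → ω'.src = v → ¬ ω'.CuspIdx c 0 →
      ω.cuspCount c ≤ ω'.cuspCount c}

/-- The one-edge path `(v, e, u)`. -/
def singleWalk (G : Multigraph V E) (e : E) (v u : V)
    (hends : ∀ w : V, G.inc e w ↔ w = v ∨ w = u) : G.Walk where
  len := 1
  vert := fun i => if (i : ℕ) = 0 then v else u
  edge := fun _ => e
  incs := by
    intro i h w
    have hi : i = 0 := by omega
    subst hi
    simpa using hends w

/-- An alternating cycle with respect to an edge-coloring: a cycle whose
consecutive edges (including last and first) have different colors. -/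
def Walk.IsAlternatingCycle (c : E → C) (p : G.Walk) : Prop :=
  p.IsCycle ∧
  (∀ (i : ℕ) (h : i + 1 < p.len), c (p.edge ⟨i, by omega⟩) ≠ c (p.edge ⟨i + 1, h⟩)) ∧
  (∀ h : 0 < p.len, c (p.edge ⟨p.len - 1, by omega⟩) ≠ c (p.edge ⟨0, h⟩))

/-- `a` and `b` are connected in `G − v` (by a path avoiding `v`). -/
def ReachAvoiding (G : Multigraph V E) (v a b : V) : Prop :=
  ∃ p : G.Walk, p.src = a ∧ p.tgt = b ∧
    ∀ (i : ℕ) (h : i < p.len + 1), p.vert ⟨i, h⟩ ≠ v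

/-- A perfect matching: every vertex is incident to exactly one edge of `F`. -/
def IsPerfectMatching (G : Multigraph V E) (F : Set E) : Prop :=
  ∀ v : V, ∃! e : E, e ∈ F ∧ G.inc e v

/-- A bridge: an edge contained in no cycle. -/
def IsBridge (G : Multigraph V E) (e : E) : Prop :=
  ¬ ∃ ω : G.Walk, ω.IsCycle ∧ ω.MemE e

/-- A `φ`-conformal cycle: a cycle `ω` such that `φ x` is an edge of `ω`
for every vertex `x` of `ω`. -/
def ConformalCycle (G : Multigraph V E) (φ : V → E) (ω : G.Walk) : Prop :=
  ω.IsCycle ∧ ∀ x : V, ω.MemV x → ω.MemE (φ x)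

/-- A sub-graph: sets of vertices and edges, each edge having its endpoints
among the vertices. -/
structure Subgraph (G : Multigraph V E) where
  verts : Set V
  edges : Set E
  edge_mem : ∀ e ∈ edges, ∀ w : V, G.inc e w → w ∈ verts

/-- The walk `p` lies inside the sub-graph `S`. -/
def Walk.InSub (p : G.Walk) (S : G.Subgraph) : Prop :=
  (∀ (i : ℕ) (h : i < p.len + 1), p.vert ⟨i, h⟩ ∈ S.verts) ∧
  (∀ (i : ℕ) (h : i < p.len), p.edge ⟨i, h⟩ ∈ S.edges)

/-- `S` is `⇝`-connected: any two distinct vertices of `S` are related by `⇝`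
along a path inside `S`, for any starting color constraint. -/
def Subgraph.StepConnected (c : E → V → C) (S : G.Subgraph) : Prop :=
  ∀ v ∈ S.verts, ∀ u ∈ S.verts, v ≠ u → ∀ α : C,
    ∃ (p : G.Walk) (β : C), p.InSub S ∧ G.StepsTo c v α u β p

/-- `S` is connected: non-empty, and any two of its vertices are joined by a
path lying inside it. -/
def Subgraph.IsConnected (S : G.Subgraph) : Prop :=
  (S.verts.Nonempty ∨ S.edges.Nonempty) ∧
  ∀ a ∈ S.verts, ∀ b ∈ S.verts,
    ∃ p : G.Walk, p.InSub S ∧ p.src = a ∧ p.tgt = b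

/-- The sub-graph consisting of the vertices and edges of a walk. -/
def Walk.toSub (p : G.Walk) : G.Subgraph where
  verts := {x | p.MemV x}
  edges := {e | p.MemE e}
  edge_mem := by
    rintro e ⟨i, h, rfl⟩ w hw
    rw [p.incs i h w] at hw
    rcases hw with h' | h'
    · exact ⟨i, by omega, h'.symm⟩
    · exact ⟨i + 1, by omega, h'.symm⟩

/-- Union of sub-graphs. -/
def Subgraph.union (S R : G.Subgraph) : G.Subgraph where
  verts := S.verts ∪ R.verts
  edges := S.edges ∪ R.edges
  edge_mem := by
    rintro e (he | he) w hw
    · exact Or.inl (S.edge_mem e he w hw)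
    · exact Or.inr (R.edge_mem e he w hw)

/-- Inclusion of sub-graphs. -/
def Subgraph.le (S T : G.Subgraph) : Prop := S.verts ⊆ T.verts ∧ S.edges ⊆ T.edges

/-- `S` is a union of cusp-free cycles. -/
def IsCuspFreeCycleUnion (G : Multigraph V E) (c : E → V → C) (S : G.Subgraph) : Prop :=
  ∃ F : Set G.Walk, (∀ ω ∈ F, Walk.IsCycle ω ∧ Walk.CuspFree c ω) ∧
    S.verts = {x | ∃ ω ∈ F, Walk.MemV ω x} ∧
    S.edges = {e | ∃ ω ∈ F, Walk.MemE ω e}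

/-- `𝕺`: the set of maximal connected unions of cusp-free cycles. -/
def MaxCFCU (G : Multigraph V E) (c : E → V → C) : Set (G.Subgraph) :=
  {S | G.IsCuspFreeCycleUnion c S ∧ S.IsConnected ∧
    ∀ T : G.Subgraph, G.IsCuspFreeCycleUnion c T → T.IsConnected → S.le T → T.le S}

end Multigraph

/-- A finite directed loopless multigraph. -/
structure DirMultigraph (V : Type) (E : Type) where
  srcE : E → V
  tgtE : E → V
  ne : ∀ e : E, srcE e ≠ tgtE e

/-- The underlying undirected multigraph of a directed multigraph. -/
def DirMultigraph.toMultigraph {V E : Type} (D : DirMultigraph V E) : Multigraph V E where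
  inc e w := w = D.srcE e ∨ w = D.tgtE e
  exists_two e := ⟨D.srcE e, D.tgtE e, D.ne e, fun _ => Iff.rfl⟩

/-- `v` is a turning vertex of the cycle `ω`: the two edges incident to `v`
in `ω` either both have source `v` or both have target `v`. -/
def DirMultigraph.TurningAt {V E : Type} (D : DirMultigraph V E)
    (ω : D.toMultigraph.Walk) (v : V) : Prop :=
  (∃ (j : ℕ) (h1 : 0 < j) (h2 : j < ω.len),
      ω.vert ⟨j, by omega⟩ = v ∧
      ((D.srcE (ω.edge ⟨j - 1, by omega⟩) = v ∧ D.srcE (ω.edge ⟨j, h2⟩) = v) ∨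
       (D.tgtE (ω.edge ⟨j - 1, by omega⟩) = v ∧ D.tgtE (ω.edge ⟨j, h2⟩) = v))) ∨
  (Multigraph.Walk.IsClosed ω ∧ Multigraph.Walk.src ω = v ∧
    ∃ h : 0 < ω.len,
      ((D.srcE (ω.edge ⟨ω.len - 1, by omega⟩) = v ∧ D.srcE (ω.edge ⟨0, h⟩) = v) ∨
       (D.tgtE (ω.edge ⟨ω.len - 1, by omega⟩) = v ∧ D.tgtE (ω.edge ⟨0, h⟩) = v)))

namespace Multigraph

variable {V E C : Type} {G : Multigraph V E}

namespace Walk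

lemma vert_congr (p : G.Walk) {a b : ℕ} (ha : a < p.len + 1) (hb : b < p.len + 1)
    (h : a = b) : p.vert ⟨a, ha⟩ = p.vert ⟨b, hb⟩ := by subst h; rfl

lemma edge_congr (p : G.Walk) {a b : ℕ} (ha : a < p.len) (hb : b < p.len)
    (h : a = b) : p.edge ⟨a, ha⟩ = p.edge ⟨b, hb⟩ := by subst h; rfl

lemma two_le_len (p : G.Walk) (hn : 0 < p.len) (hcl : p.IsClosed) : 2 ≤ p.len := by
  by_contra h
  have h1 : p.len = 1 := by omega
  have hv : p.vert ⟨0, by omega⟩ = p.vert ⟨1, by omega⟩ := by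
    have := hcl
    unfold IsClosed src tgt at this
    rw [this]
    exact p.vert_congr _ _ h1
  obtain ⟨a, b, hab, hiff⟩ := G.exists_two (p.edge ⟨0, hn⟩)
  have hinc := p.incs 0 hn
  have ha : a = p.vert ⟨0, by omega⟩ := by
    have := (hinc a).mp ((hiff a).mpr (Or.inl rfl))
    rcases this with h' | h'
    · exact h'
    · rw [h', ← hv]
  have hb : b = p.vert ⟨0, by omega⟩ := by
    have := (hinc b).mp ((hiff b).mpr (Or.inr rfl))
    rcases this with h' | h'
    · exact h'
    · rw [h', ← hv]
  exact hab (ha.trans hb.symm)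

/-- vertex of a closed walk at a position taken mod the length. -/
def mvert (p : G.Walk) (hn : 0 < p.len) (a : ℕ) : V :=
  p.vert ⟨a % p.len, by have := Nat.mod_lt a hn; omega⟩

/-- edge of a closed walk at a position taken mod the length. -/
def medge (p : G.Walk) (hn : 0 < p.len) (a : ℕ) : E :=
  p.edge ⟨a % p.len, Nat.mod_lt a hn⟩

lemma mvert_congr (p : G.Walk) (hn : 0 < p.len) {a b : ℕ} (h : a % p.len = b % p.len) :
    p.mvert hn a = p.mvert hn b := by
  unfold mvert; exact p.vert_congr _ _ h

lemma medge_congr (p : G.Walk) (hn : 0 < p.len) {a b : ℕ} (h : a % p.len = b % p.len) :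
    p.medge hn a = p.medge hn b := by
  unfold medge; exact p.edge_congr _ _ h

lemma mvert_add_mul (p : G.Walk) (hn : 0 < p.len) (a t : ℕ) :
    p.mvert hn (a + p.len * t) = p.mvert hn a :=
  p.mvert_congr hn (Nat.add_mul_mod_self_left a p.len t)

lemma medge_add_mul (p : G.Walk) (hn : 0 < p.len) (a t : ℕ) :
    p.medge hn (a + p.len * t) = p.medge hn a :=
  p.medge_congr hn (Nat.add_mul_mod_self_left a p.len t)

lemma mvert_of_lt (p : G.Walk) (hn : 0 < p.len) {a : ℕ} (h : a < p.len) :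
    p.mvert hn a = p.vert ⟨a, by omega⟩ := by
  unfold mvert; exact p.vert_congr _ _ (Nat.mod_eq_of_lt h)

lemma medge_of_lt (p : G.Walk) (hn : 0 < p.len) {a : ℕ} (h : a < p.len) :
    p.medge hn a = p.edge ⟨a, by omega⟩ := by
  unfold medge; exact p.edge_congr _ _ (Nat.mod_eq_of_lt h)

lemma mvert_succ (p : G.Walk) (hn : 0 < p.len) (hcl : p.IsClosed) (a : ℕ) :
    p.mvert hn (a + 1) = p.vert ⟨a % p.len + 1, by have := Nat.mod_lt a hn; omega⟩ := by
  have hn2 : 2 ≤ p.len := p.two_le_len hn hcl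
  have hm : a % p.len < p.len := Nat.mod_lt a hn
  have hmod : (a + 1) % p.len = (a % p.len + 1) % p.len := by
    rw [Nat.add_mod a 1 p.len, Nat.mod_eq_of_lt (show 1 < p.len by omega)]
  by_cases hc : a % p.len + 1 < p.len
  · have : (a + 1) % p.len = a % p.len + 1 := by rw [hmod]; exact Nat.mod_eq_of_lt hc
    unfold mvert
    exact p.vert_congr _ _ this
  · have he : a % p.len + 1 = p.len := by omega
    have h0 : (a + 1) % p.len = 0 := by rw [hmod, he, Nat.mod_self]
    unfold mvert
    rw [p.vert_congr _ (by omega) h0]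
    have := hcl
    unfold IsClosed src tgt at this
    rw [this]
    exact p.vert_congr _ _ he.symm

lemma medge_incs (p : G.Walk) (hn : 0 < p.len) (hcl : p.IsClosed) (a : ℕ) (w : V) :
    G.inc (p.medge hn a) w ↔ w = p.mvert hn a ∨ w = p.mvert hn (a + 1) := by
  have hm : a % p.len < p.len := Nat.mod_lt a hn
  rw [show p.medge hn a = p.edge ⟨a % p.len, hm⟩ from rfl,
    p.incs (a % p.len) hm w, p.mvert_succ hn hcl a]
  rfl

/-- Arc of a closed walk: `d` steps starting at position `i`, going forward
(`dir = true`) or backward (`dir = false`). -/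
def arc (p : G.Walk) (hn : 0 < p.len) (hcl : p.IsClosed) (i d : ℕ) (dir : Bool) : G.Walk where
  len := d
  vert := fun k => p.mvert hn (i + (bif dir then 1 else p.len - 1) * (k : ℕ))
  edge := fun k =>
    p.medge hn (i + (bif dir then 1 else p.len - 1) * (k : ℕ) + (bif dir then 0 else p.len - 1))
  incs := by
    intro k hk w
    cases dir
    · simp only [Bool.cond_false]
      rw [p.medge_incs hn hcl]
      have h1 : p.mvert hn (i + (p.len - 1) * k + (p.len - 1)) =
          p.mvert hn (i + (p.len - 1) * (k + 1)) := by
        apply p.mvert_congr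
        congr 1
        rw [Nat.mul_succ]
        ring
      have h2 : p.mvert hn (i + (p.len - 1) * k + (p.len - 1) + 1) =
          p.mvert hn (i + (p.len - 1) * k) := by
        have he : i + (p.len - 1) * k + (p.len - 1) + 1 = i + (p.len - 1) * k + p.len * 1 := by
          omega
        rw [he, p.mvert_add_mul]
      rw [h1, h2]
      exact or_comm
    · simp only [Bool.cond_true]
      rw [p.medge_incs hn hcl]
      have h1 : i + 1 * (k : ℕ) + 0 = i + 1 * (k : ℕ) := by ring
      have h2 : i + 1 * (k : ℕ) + 1 = i + 1 * ((k : ℕ) + 1) := by ring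
      rw [h1]
      constructor
      · rintro (h | h)
        · exact Or.inl h
        · right; rw [h]; exact p.mvert_congr hn (by rw [h2])
      · rintro (h | h)
        · exact Or.inl h
        · right; rw [h]; exact p.mvert_congr hn (by rw [h2])

end Walk

end Multigraph

namespace Multigraph

variable {V E C : Type} {G : Multigraph V E}

namespace Walk

lemma vert_inj (ω : G.Walk) (hsimp : ω.IsSimple) {a b : ℕ} (ha : a < ω.len) (hb : b < ω.len)
    (h : ω.vert ⟨a, by omega⟩ = ω.vert ⟨b, by omega⟩) : a = b := by
  rcases Nat.lt_trichotomy a b with hlt | he | hlt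
  · have := hsimp.2 a b (by omega) (by omega) hlt h
    omega
  · exact he
  · have := hsimp.2 b a (by omega) (by omega) hlt h.symm
    omega

lemma edge_inj (ω : G.Walk) (hsimp : ω.IsSimple) {a b : ℕ} (ha : a < ω.len) (hb : b < ω.len)
    (h : ω.edge ⟨a, ha⟩ = ω.edge ⟨b, hb⟩) : a = b := hsimp.1 a b ha hb h

lemma medge_arg (p : G.Walk) (hn : 0 < p.len) {a b : ℕ} (h : a = b) :
    p.medge hn a = p.medge hn b := by rw [h]

lemma mvert_arg (p : G.Walk) (hn : 0 < p.len) {a b : ℕ} (h : a = b) :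
    p.mvert hn a = p.mvert hn b := by rw [h]

lemma pos_mod_ne (ω : G.Walk) (hn : 0 < ω.len) (dir : Bool) (x : ℕ) {k l : ℕ} (hkl : k < l)
    (hl : l - k < ω.len) :
    (x + (bif dir then 1 else ω.len - 1) * k) % ω.len ≠
      (x + (bif dir then 1 else ω.len - 1) * l) % ω.len := by
  intro h
  set n := ω.len with hnn
  set s := (bif dir then 1 else n - 1) with hs
  have hle : x + s * k ≤ x + s * l := by
    have := Nat.mul_le_mul_left s (le_of_lt hkl)
    omega
  have hdvd : n ∣ (x + s * l) - (x + s * k) := (Nat.modEq_iff_dvd' hle).mp h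
  have hmul : s * l = s * k + s * (l - k) := by
    rw [← Nat.mul_add]
    congr 1
    omega
  have hd2 : n ∣ s * (l - k) := by
    have he : (x + s * l) - (x + s * k) = s * (l - k) := by omega
    rwa [he] at hdvd
  have hD : 0 < l - k := by omega
  cases dir
  · simp only [Bool.cond_false] at hs
    have h1 : n ∣ n * (l - k) := dvd_mul_right n (l - k)
    have h2 : n * (l - k) - s * (l - k) = l - k := by
      have : n * (l - k) = s * (l - k) + 1 * (l - k) := by
        rw [← Nat.add_mul]
        congr 1
        omega
      omega
    have h3 : n ∣ l - k := by
      have := Nat.dvd_sub h1 hd2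
      rwa [h2] at this
    have := Nat.le_of_dvd hD h3
    omega
  · simp only [Bool.cond_true] at hs
    have h3 : n ∣ l - k := by rwa [hs, one_mul] at hd2
    have := Nat.le_of_dvd hD h3
    omega

lemma noCusp (ω : G.Walk) (c : E → V → C) (hsimp : ω.IsSimple) (hcl : ω.IsClosed)
    (hn : 0 < ω.len) (hcf : ω.CuspFree c) (a : ℕ) :
    c (ω.medge hn (a + ω.len - 1)) (ω.mvert hn a) ≠ c (ω.medge hn a) (ω.mvert hn a) := by
  intro heq
  have hn2 : 2 ≤ ω.len := ω.two_le_len hn hcl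
  set n := ω.len with hnn
  set m := a % n with hm
  have hmlt : m < n := Nat.mod_lt a hn
  have hq : a = n * (a / n) + m := by rw [hm]; exact (Nat.div_add_mod a n).symm
  have hmul : n * (a / n + 1) = n * (a / n) + n := by rw [Nat.mul_add, Nat.mul_one]
  by_cases h0 : m = 0
  · -- closing cusp of ω
    have hidx : (a + n - 1) % n = n - 1 := by
      have he : a + n - 1 = (n - 1) + n * (a / n) := by omega
      rw [he, Nat.add_mul_mod_self_left, Nat.mod_eq_of_lt (by omega)]
    have he1 : ω.medge hn (a + n - 1) = ω.edge ⟨n - 1, by omega⟩ := by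
      unfold medge
      exact ω.edge_congr _ _ hidx
    have he2 : ω.medge hn a = ω.edge ⟨0, by omega⟩ := by
      unfold medge
      exact ω.edge_congr _ _ h0
    have hv0 : ω.src = ω.mvert hn a := by
      unfold src mvert
      exact ω.vert_congr _ _ h0.symm
    apply hcf 0
    refine ⟨ω.mvert hn a, c (ω.medge hn a) (ω.mvert hn a),
      Or.inr ⟨rfl, hcl, hv0, hn, ?_, ?_, ?_⟩⟩
    · intro hee
      have := ω.edge_inj hsimp (by omega) (by omega) hee
      omega
    · rw [← he1]; exact heq
    · rw [← he2]
  · -- internal cusp of ω at position m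
    have hidx : (a + n - 1) % n = m - 1 := by
      have he : a + n - 1 = (m - 1) + n * (a / n + 1) := by omega
      rw [he, Nat.add_mul_mod_self_left, Nat.mod_eq_of_lt (by omega)]
    have he1 : ω.medge hn (a + n - 1) = ω.edge ⟨m - 1, by omega⟩ := by
      unfold medge
      exact ω.edge_congr _ _ hidx
    have he2 : ω.medge hn a = ω.edge ⟨m, by omega⟩ := by
      unfold medge
      rfl
    have hv0 : ω.vert ⟨m, by omega⟩ = ω.mvert hn a := rfl
    apply hcf m
    refine ⟨ω.mvert hn a, c (ω.medge hn a) (ω.mvert hn a),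
      Or.inl ⟨by omega, hmlt, hv0, ?_, ?_, ?_⟩⟩
    · intro hee
      have := ω.edge_inj hsimp (by omega) (by omega) hee
      omega
    · rw [← he1]; exact heq
    · rw [← he2]

section Arc

variable (ω : G.Walk) (c : E → V → C) (hn : 0 < ω.len) (hcl : ω.IsClosed)
  (i d : ℕ) (dir : Bool)

lemma arc_len : (ω.arc hn hcl i d dir).len = d := rfl

lemma arc_vert (k : ℕ) (h : k < (ω.arc hn hcl i d dir).len + 1) :
    (ω.arc hn hcl i d dir).vert ⟨k, h⟩ =
      ω.mvert hn (i + (bif dir then 1 else ω.len - 1) * k) := rfl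

lemma arc_edge' (k : ℕ) (h : k < (ω.arc hn hcl i d dir).len) :
    (ω.arc hn hcl i d dir).edge ⟨k, h⟩ =
      ω.medge hn (i + (bif dir then 1 else ω.len - 1) * k + (bif dir then 0 else ω.len - 1)) :=
  rfl

lemma arc_simple (hsimp : ω.IsSimple) (hd2 : d < ω.len) :
    (ω.arc hn hcl i d dir).IsSimple := by
  set n := ω.len with hnn
  set s := (bif dir then 1 else n - 1) with hs
  set t := (bif dir then 0 else n - 1) with ht
  constructor
  · intro k l hk hl he
    rw [arc_edge', arc_edge'] at he
    by_contra hne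
    have key : ∀ k' l' : ℕ, k' < l' → l' < d →
        ω.medge hn (i + s * k' + t) ≠ ω.medge hn (i + s * l' + t) := by
      intro k' l' hkl hl' hee
      have hmm : (i + s * k' + t) % n = (i + s * l' + t) % n := by
        unfold medge at hee
        exact ω.edge_inj hsimp (Nat.mod_lt _ hn) (Nat.mod_lt _ hn) hee
      have h1 : i + s * k' + t = (i + t) + s * k' := by omega
      have h2 : i + s * l' + t = (i + t) + s * l' := by omega
      rw [h1, h2] at hmm
      exact ω.pos_mod_ne hn dir (i + t) hkl (by omega) hmm
    rcases Nat.lt_trichotomy k l with h | h | h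
    · exact key k l h hl he
    · exact hne h
    · exact key l k h hk he.symm
  · intro k l hk hl hkl hv
    exfalso
    rw [arc_vert, arc_vert] at hv
    have hmm : (i + s * k) % n = (i + s * l) % n := by
      unfold mvert at hv
      exact ω.vert_inj hsimp (Nat.mod_lt _ hn) (Nat.mod_lt _ hn) hv
    have hla : l ≤ d := by
      have : l < (ω.arc hn hcl i d dir).len + 1 := hl
      rw [arc_len] at this
      omega
    exact ω.pos_mod_ne hn dir i hkl (by omega) hmm

lemma arc_open (hsimp : ω.IsSimple) (hd1 : 0 < d) (hd2 : d < ω.len) :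
    (ω.arc hn hcl i d dir).IsOpen := by
  intro h
  set n := ω.len with hnn
  set s := (bif dir then 1 else n - 1) with hs
  unfold src tgt at h
  rw [arc_vert, arc_vert] at h
  have hmm : (i + s * 0) % n = (i + s * ((ω.arc hn hcl i d dir).len)) % n := by
    unfold mvert at h
    exact ω.vert_inj hsimp (Nat.mod_lt _ hn) (Nat.mod_lt _ hn) h
  rw [arc_len] at hmm
  exact ω.pos_mod_ne hn dir i hd1 (by omega) hmm

lemma arc_cuspFree (hsimp : ω.IsSimple) (hcf : ω.CuspFree c) (hd1 : 0 < d) (hd2 : d < ω.len) :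
    (ω.arc hn hcl i d dir).CuspFree c := by
  intro j hcusp
  obtain ⟨u, β, hc⟩ := hcusp
  rcases hc with ⟨h1, h2, hu, hne, hc1, hc2⟩ | ⟨-, hclosed, -⟩
  · have h2' : j < d := h2
    have hn2 : 2 ≤ ω.len := ω.two_le_len hn hcl
    rw [arc_edge'] at hc1 hc2
    rw [arc_vert] at hu
    cases dir
    · -- backward
      simp only [Bool.cond_false] at hc1 hc2 hu
      have hmul : (ω.len - 1) * j = (ω.len - 1) * (j - 1) + (ω.len - 1) * 1 := by
        rw [← Nat.mul_add]
        congr 1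
        omega
      rw [ω.medge_arg hn
        (show i + (ω.len - 1) * (j - 1) + (ω.len - 1) = i + (ω.len - 1) * j by omega)] at hc1
      rw [ω.medge_arg hn
        (show i + (ω.len - 1) * j + (ω.len - 1) = i + (ω.len - 1) * j + ω.len - 1 by
          omega)] at hc2
      apply ω.noCusp c hsimp hcl hn hcf (i + (ω.len - 1) * j)
      rw [hu, hc2, hc1]
    · -- forward
      simp only [Bool.cond_true] at hc1 hc2 hu
      rw [← ω.medge_add_mul hn (i + 1 * (j - 1) + 0) 1] at hc1
      rw [ω.medge_arg hn
        (show i + 1 * (j - 1) + 0 + ω.len * 1 = i + 1 * j + ω.len - 1 by omega)] at hc1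
      rw [ω.medge_arg hn (show i + 1 * j + 0 = i + 1 * j by omega)] at hc2
      apply ω.noCusp c hsimp hcl hn hcf (i + 1 * j)
      rw [hu, hc2, hc1]
  · exact (ω.arc_open hn hcl i d dir hsimp hd1 hd2) hclosed

lemma arc_src (hi : i < ω.len) :
    (ω.arc hn hcl i d dir).src = ω.vert ⟨i, by omega⟩ := by
  unfold src
  rw [arc_vert, Nat.mul_zero, Nat.add_zero]
  exact ω.mvert_of_lt hn hi

lemma arc_tgt :
    (ω.arc hn hcl i d dir).tgt =
      ω.mvert hn (i + (bif dir then 1 else ω.len - 1) * d) := rfl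

lemma arc_edge0 (hd1 : 0 < d) :
    (ω.arc hn hcl i d dir).edge ⟨0, hd1⟩ =
      ω.medge hn (i + (bif dir then 0 else ω.len - 1)) := by
  rw [ω.arc_edge' hn hcl i d dir 0 hd1, Nat.mul_zero, Nat.add_zero]

lemma arc_inSub :
    (ω.arc hn hcl i d dir).InSub ω.toSub := by
  constructor
  · intro k h
    rw [arc_vert]
    exact ⟨(i + (bif dir then 1 else ω.len - 1) * k) % ω.len,
      by have := Nat.mod_lt (i + (bif dir then 1 else ω.len - 1) * k) hn; omega, rfl⟩
  · intro k h
    rw [arc_edge']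
    exact ⟨(i + (bif dir then 1 else ω.len - 1) * k + (bif dir then 0 else ω.len - 1)) % ω.len,
      Nat.mod_lt _ hn, rfl⟩

lemma arc_stepsTo (hsimp : ω.IsSimple) (hcf : ω.CuspFree c)
    (hd1 : 0 < d) (hd2 : d < ω.len) (hi : i < ω.len)
    (v u : V) (α : C) (hv : ω.vert ⟨i, by omega⟩ = v)
    (ht : (ω.arc hn hcl i d dir).tgt = u)
    (hs : c (ω.medge hn (i + (bif dir then 0 else ω.len - 1))) v ≠ α) :
    ∃ β, (ω.arc hn hcl i d dir).InSub ω.toSub ∧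
      G.StepsTo c v α u β (ω.arc hn hcl i d dir) := by
  refine ⟨c ((ω.arc hn hcl i d dir).edge ⟨d - 1, by show d - 1 < d; omega⟩)
      ((ω.arc hn hcl i d dir).tgt),
    ω.arc_inSub hn hcl i d dir, ω.arc_simple hn hcl i d dir hsimp hd2,
    ω.arc_open hn hcl i d dir hsimp hd1 hd2,
    ω.arc_cuspFree c hn hcl i d dir hsimp hcf hd1 hd2,
    (ω.arc_src hn hcl i d dir hi).trans hv, ht, ?_, ?_⟩
  · intro h
    rw [ω.arc_edge' hn hcl i d dir 0 h, Nat.mul_zero, Nat.add_zero,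
      ω.arc_src hn hcl i d dir hi, hv]
    exact hs
  · exact ⟨hd1, rfl⟩

end Arc

end Walk

end Multigraph

open Multigraph in
/-- The sub-graph of a cusp-free cycle is `⇝`-connected. -/
theorem cuspfree_cycle_stepConnected
    {V E C : Type} [Fintype V] [Fintype E] [Fintype C]
    (G : Multigraph V E) (c : E → V → C)
    (ω : G.Walk) (hcyc : ω.IsCycle) (hcf : ω.CuspFree c) :
    ω.toSub.StepConnected c := by
  obtain ⟨hsimp, hcl, hn⟩ := hcyc
  intro v hv u hu hvu α
  have hnorm : ∀ x : V, ω.MemV x → ∃ k : ℕ, ∃ hk : k < ω.len, ω.vert ⟨k, by omega⟩ = x := by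
    rintro x ⟨k0, hk0, rfl⟩
    by_cases h : k0 < ω.len
    · exact ⟨k0, h, rfl⟩
    · have hk : k0 = ω.len := by omega
      refine ⟨0, hn, ?_⟩
      have hc2 := hcl
      unfold Walk.IsClosed Walk.src Walk.tgt at hc2
      rw [hc2]
      exact ω.vert_congr _ _ hk.symm
  obtain ⟨i, hi, hvi⟩ := hnorm v hv
  obtain ⟨j, hj, huj⟩ := hnorm u hu
  have hij : i ≠ j := by
    rintro rfl
    exact hvu (hvi.symm.trans huj)
  have hn2 : 2 ≤ ω.len := ω.two_le_len hn hcl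
  have hmvi : ω.mvert hn i = v := by rw [ω.mvert_of_lt hn hi]; exact hvi
  have hcols := ω.noCusp c hsimp hcl hn hcf i
  rw [hmvi] at hcols
  by_cases hfa : c (ω.medge hn i) v = α
  · -- backward arc (dir = false)
    have hs : c (ω.medge hn (i + (bif false then 0 else ω.len - 1))) v ≠ α := by
      simp only [Bool.cond_false]
      rw [ω.medge_arg hn (show i + (ω.len - 1) = i + ω.len - 1 by omega)]
      intro he
      exact hcols (he.trans hfa.symm)
    rcases Nat.lt_or_ge j i with hcase | hcase
    · have h1 : 0 < i - j := by omega
      have h2 : i - j < ω.len := by omega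
      have hmulB : (ω.len - 1) * (i - j) + 1 * (i - j) = ω.len * (i - j) := by
        rw [← Nat.add_mul]
        congr 1
        omega
      have htgt : (ω.arc hn hcl i (i - j) false).tgt = u := by
        rw [ω.arc_tgt hn hcl i (i - j) false]
        simp only [Bool.cond_false]
        rw [ω.mvert_arg hn
          (show i + (ω.len - 1) * (i - j) = j + ω.len * (i - j) by omega),
          ω.mvert_add_mul, ω.mvert_of_lt hn hj]
        exact huj
      obtain ⟨β, hins, hsteps⟩ := ω.arc_stepsTo c hn hcl i (i - j) false hsimp hcf
        h1 h2 hi v u α hvi htgt hs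
      exact ⟨_, β, hins, hsteps⟩
    · have hlt : i < j := by omega
      have h1 : 0 < i + ω.len - j := by omega
      have h2 : i + ω.len - j < ω.len := by omega
      have hmulB : (ω.len - 1) * (i + ω.len - j) + 1 * (i + ω.len - j) =
          ω.len * (i + ω.len - j) := by
        rw [← Nat.add_mul]
        congr 1
        omega
      have hmulC : ω.len * (i + ω.len - j - 1) + ω.len * 1 = ω.len * (i + ω.len - j) := by
        rw [← Nat.mul_add]
        congr 1
        omega
      have htgt : (ω.arc hn hcl i (i + ω.len - j) false).tgt = u := by
        rw [ω.arc_tgt hn hcl i (i + ω.len - j) false]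
        simp only [Bool.cond_false]
        rw [ω.mvert_arg hn
          (show i + (ω.len - 1) * (i + ω.len - j) =
            j + ω.len * (i + ω.len - j - 1) by omega),
          ω.mvert_add_mul, ω.mvert_of_lt hn hj]
        exact huj
      obtain ⟨β, hins, hsteps⟩ := ω.arc_stepsTo c hn hcl i (i + ω.len - j) false hsimp hcf
        h1 h2 hi v u α hvi htgt hs
      exact ⟨_, β, hins, hsteps⟩
  · -- forward arc (dir = true)
    have hs : c (ω.medge hn (i + (bif true then 0 else ω.len - 1))) v ≠ α := by
      simp only [Bool.cond_true]
      rw [ω.medge_arg hn (Nat.add_zero i)]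
      exact hfa
    rcases Nat.lt_or_ge i j with hcase | hcase
    · have h1 : 0 < j - i := by omega
      have h2 : j - i < ω.len := by omega
      have htgt : (ω.arc hn hcl i (j - i) true).tgt = u := by
        rw [ω.arc_tgt hn hcl i (j - i) true]
        simp only [Bool.cond_true]
        rw [ω.mvert_arg hn (show i + 1 * (j - i) = j by omega),
          ω.mvert_of_lt hn hj]
        exact huj
      obtain ⟨β, hins, hsteps⟩ := ω.arc_stepsTo c hn hcl i (j - i) true hsimp hcf
        h1 h2 hi v u α hvi htgt hs
      exact ⟨_, β, hins, hsteps⟩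
    · have hlt : j < i := by omega
      have h1 : 0 < j + ω.len - i := by omega
      have h2 : j + ω.len - i < ω.len := by omega
      have htgt : (ω.arc hn hcl i (j + ω.len - i) true).tgt = u := by
        rw [ω.arc_tgt hn hcl i (j + ω.len - i) true]
        simp only [Bool.cond_true]
        rw [ω.mvert_arg hn (show i + 1 * (j + ω.len - i) = j + ω.len * 1 by omega),
          ω.mvert_add_mul, ω.mvert_of_lt hn hj]
        exact huj
      obtain ⟨β, hins, hsteps⟩ := ω.arc_stepsTo c hn hcl i (j + ω.len - i) true hsimp hcf
        h1 h2 hi v u α hvi htgt hs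
      exact ⟨_, β, hins, hsteps⟩
end

section
/- Let S and R be two ⇝-connected sub-graphs of a locally colored graph G that have at least one vertex in common. Then the sub-graph S ∪ R is ⇝-connected. -/
/-! Take `v` in `S` but not in `R` and `u` in `R` but not in `S`, and a common vertex `x`.
Follow a `⇝`-path inside `S` from `v` to `x` only until it first meets `R`, at `y` say, arriving
there in color `γ`, and continue with a `⇝`-path inside `R` from `(y, γ)` to `u`. The first piece
meets `R` only in `y`, so the concatenation is simple and open, and since the second piece does
not start in color `γ` there is no cusp at `y`. -/

namespace Multigraph

variable {V E C : Type} {G : Multigraph V E}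

theorem Subgraph.le_union_left (S R : G.Subgraph) : S.le (S.union R) :=
  ⟨Set.subset_union_left, Set.subset_union_left⟩

theorem Subgraph.le_union_right (S R : G.Subgraph) : R.le (S.union R) :=
  ⟨Set.subset_union_right, Set.subset_union_right⟩

theorem Subgraph.union_comm_le (S R : G.Subgraph) : (R.union S).le (S.union R) :=
  ⟨(Set.union_comm _ _).le, (Set.union_comm _ _).le⟩

namespace Walk

variable {p q : G.Walk}

theorem InSub.mono {S T : G.Subgraph} (hp : p.InSub S) (hST : S.le T) : p.InSub T :=
  ⟨fun i h => hST.1 (hp.1 i h), fun i h => hST.2 (hp.2 i h)⟩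

theorem vert_injective (hs : p.IsSimple) (ho : p.IsOpen) : Function.Injective p.vert := by
  suffices h : ∀ i j : Fin (p.len + 1), i < j → p.vert i ≠ p.vert j by
    intro i j hij
    rcases lt_trichotomy i j with hlt | heq | hgt
    · exact absurd hij (h i j hlt)
    · exact heq
    · exact absurd hij.symm (h j i hgt)
  rintro ⟨i, hi⟩ ⟨j, hj⟩ hij hv
  obtain ⟨rfl, rfl⟩ := hs.2 i j hi hj hij hv
  exact ho hv

theorem IsSimple.edge_injective (hs : p.IsSimple) : Function.Injective p.edge :=
  fun ⟨i, hi⟩ ⟨j, hj⟩ he => Fin.ext (hs.1 i j hi hj he)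

theorem isSimple_of_injective (hv : Function.Injective p.vert)
    (he : Function.Injective p.edge) : p.IsSimple :=
  ⟨fun _ _ _ _ h => congrArg Fin.val (he h),
    fun _ _ _ _ hij h => absurd (congrArg Fin.val (hv h)) hij.ne⟩

theorem isOpen_of_injective (hv : Function.Injective p.vert) (hpos : 0 < p.len) : p.IsOpen :=
  fun h => hpos.ne (congrArg Fin.val (hv h))

theorem vert_eq_or_of_edge_eq {i j : ℕ} (hi : i < p.len) (hj : j < q.len)
    (he : p.edge ⟨i, hi⟩ = q.edge ⟨j, hj⟩) :
    p.vert ⟨i, by omega⟩ = q.vert ⟨j, by omega⟩ ∨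
      p.vert ⟨i, by omega⟩ = q.vert ⟨j + 1, by omega⟩ :=
  (q.incs j hj _).1 (he ▸ (p.incs i hi _).2 (Or.inl rfl))

def take (p : G.Walk) (m : ℕ) (hm : m ≤ p.len) : G.Walk where
  len := m
  vert := p.vert ∘ Fin.castLE (by omega)
  edge := p.edge ∘ Fin.castLE hm
  incs i hi w := p.incs i (by omega) w

theorem InSub.take {S : G.Subgraph} (hp : p.InSub S) {m : ℕ} (hm : m ≤ p.len) :
    (p.take m hm).InSub S :=
  ⟨fun i (_ : i < m + 1) => hp.1 i (by omega), fun i (_ : i < m) => hp.2 i (by omega)⟩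

def append (p q : G.Walk) (h : p.tgt = q.src) : G.Walk where
  len := p.len + q.len
  vert i :=
    if hi : (i : ℕ) < p.len then p.vert ⟨i, by omega⟩ else q.vert ⟨i - p.len, by omega⟩
  edge i := if hi : (i : ℕ) < p.len then p.edge ⟨i, hi⟩ else q.edge ⟨i - p.len, by omega⟩
  incs i hi w := by
    by_cases hip : i < p.len
    · simp only [dif_pos hip]
      by_cases hip' : i + 1 < p.len
      · rw [dif_pos hip']
        exact p.incs i hip w
      · rw [dif_neg hip']
        have hq0 : q.vert ⟨i + 1 - p.len, by omega⟩ = p.vert ⟨i + 1, by omega⟩ := by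
          simp only [show i + 1 = p.len by omega, Nat.sub_self]
          exact h.symm
        rw [hq0]
        exact p.incs i hip w
    · simp only [dif_neg hip, show ¬ i + 1 < p.len by omega, dite_false,
        show i + 1 - p.len = i - p.len + 1 by omega]
      exact q.incs (i - p.len) (by omega) w

def AppendDisjoint (p q : G.Walk) : Prop :=
  ∀ (i : ℕ) (hi : i < p.len) (j : ℕ) (hj : j < q.len + 1),
    p.vert ⟨i, by omega⟩ ≠ q.vert ⟨j, hj⟩

variable {h : p.tgt = q.src}

theorem append_len : (p.append q h).len = p.len + q.len := rfl

theorem append_vert_of_lt {i : ℕ} (hi : i < (p.append q h).len + 1) (hip : i < p.len) :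
    (p.append q h).vert ⟨i, hi⟩ = p.vert ⟨i, by omega⟩ :=
  dif_pos hip

theorem append_vert_of_le {i : ℕ} (hi : i < (p.append q h).len + 1) (hip : p.len ≤ i) :
    (p.append q h).vert ⟨i, hi⟩ = q.vert ⟨i - p.len, by rw [append_len] at hi; omega⟩ :=
  dif_neg hip.not_gt

theorem append_edge_of_lt {i : ℕ} (hi : i < (p.append q h).len) (hip : i < p.len) :
    (p.append q h).edge ⟨i, hi⟩ = p.edge ⟨i, hip⟩ :=
  dif_pos hip

theorem append_edge_of_le {i : ℕ} (hi : i < (p.append q h).len) (hip : p.len ≤ i) :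
    (p.append q h).edge ⟨i, hi⟩ = q.edge ⟨i - p.len, by rw [append_len] at hi; omega⟩ :=
  dif_neg hip.not_gt

theorem append_src : (p.append q h).src = p.src := by
  rcases Nat.eq_zero_or_pos p.len with hp0 | hp0
  · have hpt : p.tgt = p.src := congrArg p.vert (Fin.ext hp0)
    rw [src, append_vert_of_le _ hp0.le, ← hpt, h]
    simp only [Nat.zero_sub]
    rfl
  · exact append_vert_of_lt _ hp0

theorem append_tgt : (p.append q h).tgt = q.tgt := by
  rw [tgt, append_vert_of_le _ (by rw [append_len]; omega)]
  simp only [append_len, Nat.add_sub_cancel_left]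
  rfl

theorem InSub.append {S : G.Subgraph} (hp : p.InSub S) (hq : q.InSub S) :
    (p.append q h).InSub S := by
  constructor
  · intro i hi
    rcases Nat.lt_or_ge i p.len with hip | hip
    · rw [append_vert_of_lt hi hip]
      exact hp.1 _ _
    · rw [append_vert_of_le hi hip]
      exact hq.1 _ _
  · intro i hi
    rcases Nat.lt_or_ge i p.len with hip | hip
    · rw [append_edge_of_lt hi hip]
      exact hp.2 _ _
    · rw [append_edge_of_le hi hip]
      exact hq.2 _ _

theorem vert_injective_append (hdisj : p.AppendDisjoint q) (hp : Function.Injective p.vert)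
    (hq : Function.Injective q.vert) : Function.Injective (p.append q h).vert := by
  rintro ⟨i, hi⟩ ⟨j, hj⟩ hij
  apply Fin.ext
  show i = j
  rcases Nat.lt_or_ge i p.len with hip | hip <;> rcases Nat.lt_or_ge j p.len with hjp | hjp
  · rw [append_vert_of_lt hi hip, append_vert_of_lt hj hjp] at hij
    exact Fin.mk.inj_iff.mp (hp hij)
  · rw [append_vert_of_lt hi hip, append_vert_of_le hj hjp] at hij
    exact absurd hij (hdisj i hip _ _)
  · rw [append_vert_of_le hi hip, append_vert_of_lt hj hjp] at hij
    exact absurd hij.symm (hdisj j hjp _ _)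
  · rw [append_vert_of_le hi hip, append_vert_of_le hj hjp] at hij
    have := Fin.mk.inj_iff.mp (hq hij)
    omega

theorem edge_injective_append (hdisj : p.AppendDisjoint q) (hp : Function.Injective p.edge)
    (hq : Function.Injective q.edge) : Function.Injective (p.append q h).edge := by
  have hcross : ∀ (i : ℕ) (hi : i < p.len) (j : ℕ) (hj : j < q.len),
      p.edge ⟨i, hi⟩ ≠ q.edge ⟨j, hj⟩ := fun i hi j hj he =>
    (vert_eq_or_of_edge_eq hi hj he).elim (hdisj i hi j _) (hdisj i hi (j + 1) _)
  rintro ⟨i, hi⟩ ⟨j, hj⟩ hij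
  apply Fin.ext
  show i = j
  rcases Nat.lt_or_ge i p.len with hip | hip <;> rcases Nat.lt_or_ge j p.len with hjp | hjp
  · rw [append_edge_of_lt hi hip, append_edge_of_lt hj hjp] at hij
    exact Fin.mk.inj_iff.mp (hp hij)
  · rw [append_edge_of_lt hi hip, append_edge_of_le hj hjp] at hij
    exact absurd hij (hcross i hip _ _)
  · rw [append_edge_of_le hi hip, append_edge_of_lt hj hjp] at hij
    exact absurd hij.symm (hcross j hjp _ _)
  · rw [append_edge_of_le hi hip, append_edge_of_le hj hjp] at hij
    have := Fin.mk.inj_iff.mp (hq hij)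
    omega

theorem cuspFree_append {c : E → V → C} (hp : p.CuspFree c) (hq : q.CuspFree c)
    (hjoin : ∀ hp0 : 0 < p.len,
      q.StartColorNe c (c (p.edge ⟨p.len - 1, by omega⟩) p.tgt))
    (ho : (p.append q h).IsOpen) : (p.append q h).CuspFree c := by
  rintro j ⟨u, a, ⟨hj0, hjl, hvu, hne, hc1, hc2⟩ | ⟨-, hcl, -⟩⟩
  · rcases lt_trichotomy j p.len with hjp | rfl | hjp
    · rw [append_vert_of_lt _ hjp] at hvu
      rw [append_edge_of_lt _ (by omega)] at hne hc1
      rw [append_edge_of_lt _ hjp] at hne hc2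
      exact hp j ⟨u, a, Or.inl ⟨hj0, hjp, hvu, hne, hc1, hc2⟩⟩
    · rw [append_vert_of_le _ le_rfl] at hvu
      rw [append_edge_of_lt _ (by omega)] at hc1
      rw [append_edge_of_le _ le_rfl] at hc2
      simp only [Nat.sub_self] at hvu hc2
      have hu : p.tgt = u := h.trans hvu
      subst hu
      exact hjoin hj0 (by rw [append_len] at hjl; omega) (by rw [← h, hc2, hc1])
    · rw [append_vert_of_le _ hjp.le] at hvu
      rw [append_edge_of_le _ (by omega)] at hne hc1
      rw [append_edge_of_le _ hjp.le] at hne hc2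
      simp only [show j - 1 - p.len = j - p.len - 1 by omega] at hne hc1
      exact hq (j - p.len) ⟨u, a, Or.inl ⟨by omega, by rw [append_len] at hjl; omega,
        hvu, hne, hc1, hc2⟩⟩
  · exact ho hcl

theorem exists_first_vert_mem (p : G.Walk) {B : Set V} (hsrc : p.src ∉ B) (htgt : p.tgt ∈ B) :
    ∃ (m : ℕ) (hm : m ≤ p.len), 0 < m ∧ p.vert ⟨m, by omega⟩ ∈ B ∧
      ∀ (i : ℕ) (hi : i < m), p.vert ⟨i, by omega⟩ ∉ B := by
  classical
  have hex : ∃ m, ∃ hm : m ≤ p.len, p.vert ⟨m, by omega⟩ ∈ B := ⟨p.len, le_rfl, htgt⟩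
  obtain ⟨hm, hmB⟩ := Nat.find_spec hex
  exact ⟨Nat.find hex, hm, Nat.pos_of_ne_zero fun h0 => hsrc ((Nat.find_eq_zero hex).1 h0).2,
    hmB, fun i hi hiB => Nat.find_min hex hi ⟨by omega, hiB⟩⟩

end Walk

variable {c : E → V → C} {p q : G.Walk} {v u : V} {α β γ : C}

theorem StepsTo.src_eq (hp : G.StepsTo c v α u β p) : p.src = v := hp.2.2.2.1

theorem StepsTo.tgt_eq (hp : G.StepsTo c v α u β p) : p.tgt = u := hp.2.2.2.2.1

theorem StepsTo.take {x : V} (hp : G.StepsTo c v α x β p) {m : ℕ} (hm0 : 0 < m)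
    (hm : m ≤ p.len) :
    G.StepsTo c v α (p.vert ⟨m, by omega⟩)
      (c (p.edge ⟨m - 1, by omega⟩) (p.vert ⟨m, by omega⟩)) (p.take m hm) := by
  obtain ⟨hs, ho, hcf, rfl, -, hstart, -⟩ := hp
  have hinj : Function.Injective (p.take m hm).vert :=
    (Walk.vert_injective hs ho).comp (Fin.castLE_injective _)
  have ho' : (p.take m hm).IsOpen := Walk.isOpen_of_injective hinj hm0
  refine ⟨Walk.isSimple_of_injective hinj (hs.edge_injective.comp (Fin.castLE_injective _)),
    ho', ?_, rfl, rfl, fun _ => hstart (by omega), hm0, rfl⟩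
  rintro j ⟨u, a, ⟨hj0, hjm, hcusp⟩ | ⟨-, hcl, -⟩⟩
  · exact hcf j ⟨u, a, Or.inl ⟨hj0, lt_of_lt_of_le hjm hm, hcusp⟩⟩
  · exact ho' hcl

theorem StepsTo.append {y : V} (hp : G.StepsTo c v α y β p) (hq : G.StepsTo c y β u γ q)
    (h : p.tgt = q.src) (hdisj : p.AppendDisjoint q) : G.StepsTo c v α u γ (p.append q h) := by
  obtain ⟨hps, hpo, hpc, rfl, rfl, hpstart, hp0, hpend⟩ := hp
  obtain ⟨hqs, hqo, hqc, -, rfl, hqstart, hq0, hqend⟩ := hq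
  have hinj := Walk.vert_injective_append hdisj (Walk.vert_injective hps hpo)
    (Walk.vert_injective hqs hqo) (h := h)
  have ho : (p.append q h).IsOpen :=
    Walk.isOpen_of_injective hinj (by rw [Walk.append_len]; omega)
  refine ⟨Walk.isSimple_of_injective hinj
      (Walk.edge_injective_append hdisj hps.edge_injective hqs.edge_injective), ho,
    Walk.cuspFree_append hpc hqc (fun _ => hpend ▸ hqstart) ho, Walk.append_src,
    Walk.append_tgt, ?_, ⟨by rw [Walk.append_len]; omega, ?_⟩⟩
  · intro h0
    rw [Walk.append_edge_of_lt _ hp0, Walk.append_src]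
    exact hpstart hp0
  · rw [Walk.append_edge_of_le _ (by rw [Walk.append_len]; omega), Walk.append_tgt]
    simp only [Walk.append_len, show p.len + q.len - 1 - p.len = q.len - 1 by omega]
    exact hqend

theorem Subgraph.StepConnected.exists_stepsTo_union {A B : G.Subgraph}
    (hA : A.StepConnected c) (hB : B.StepConnected c) {x : V} (hxA : x ∈ A.verts)
    (hxB : x ∈ B.verts) (hvA : v ∈ A.verts) (huB : u ∈ B.verts) (hvu : v ≠ u) (α : C) :
    ∃ (w : G.Walk) (β : C), w.InSub (A.union B) ∧ G.StepsTo c v α u β w := by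
  by_cases hvB : v ∈ B.verts
  · obtain ⟨w, β, hw, hs⟩ := hB v hvB u huB hvu α
    exact ⟨w, β, hw.mono (Subgraph.le_union_right A B), hs⟩
  by_cases huA : u ∈ A.verts
  · obtain ⟨w, β, hw, hs⟩ := hA v hvA u huA hvu α
    exact ⟨w, β, hw.mono (Subgraph.le_union_left A B), hs⟩
  obtain ⟨p, _, hpA, hp⟩ := hA v hvA x hxA (fun hvx => hvB (hvx ▸ hxB)) α
  obtain ⟨m, hm, hm0, hyB, hbefore⟩ :=
    p.exists_first_vert_mem (B := B.verts) (hp.src_eq ▸ hvB) (hp.tgt_eq ▸ hxB)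
  have hyu : p.vert ⟨m, by omega⟩ ≠ u := fun hyu => huA (hyu ▸ hpA.1 m (by omega))
  obtain ⟨q, γ, hqB, hq⟩ :=
    hB _ hyB u huB hyu (c (p.edge ⟨m - 1, by omega⟩) (p.vert ⟨m, by omega⟩))
  have hjoin : (p.take m hm).tgt = q.src := hq.src_eq.symm
  refine ⟨(p.take m hm).append q hjoin, γ,
    ((hpA.take hm).mono (Subgraph.le_union_left A B)).append
      (hqB.mono (Subgraph.le_union_right A B)),
    (hp.take hm0 hm).append hq hjoin ?_⟩
  intro i hi j hj hij
  exact hbefore i hi (hij ▸ hqB.1 j hj)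

end Multigraph

open Multigraph in
theorem union_stepConnected_general
    {V E C : Type}
    (G : Multigraph V E) (c : E → V → C)
    (S R : G.Subgraph)
    (hS : S.StepConnected c) (hR : R.StepConnected c)
    (hmeet : ∃ x : V, x ∈ S.verts ∧ x ∈ R.verts) :
    (S.union R).StepConnected c := by
  obtain ⟨x, hxS, hxR⟩ := hmeet
  intro v hv u hu hvu α
  rcases hv with hvS | hvR <;> rcases hu with huS | huR
  · obtain ⟨w, β, hw, hs⟩ := hS v hvS u huS hvu α
    exact ⟨w, β, hw.mono (Subgraph.le_union_left S R), hs⟩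
  · exact hS.exists_stepsTo_union hR hxS hxR hvS huR hvu α
  · obtain ⟨w, β, hw, hs⟩ := hR.exists_stepsTo_union hS hxR hxS hvR huS hvu α
    exact ⟨w, β, hw.mono (Subgraph.union_comm_le S R), hs⟩
  · obtain ⟨w, β, hw, hs⟩ := hR v hvR u huR hvu α
    exact ⟨w, β, hw.mono (Subgraph.le_union_right S R), hs⟩

open Multigraph in
/-- The union of two `⇝`-connected sub-graphs sharing a vertex is
`⇝`-connected. -/
theorem union_stepConnected
    {V E C : Type} [Fintype V] [Fintype E] [Fintype C]
    (G : Multigraph V E) (c : E → V → C)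
    (S R : G.Subgraph)
    (hS : S.StepConnected c) (hR : R.StepConnected c)
    (hmeet : ∃ x : V, x ∈ S.verts ∧ x ∈ R.verts) :
    (S.union R).StepConnected c :=
  union_stepConnected_general G c S R hS hR hmeet
end
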